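/- (Appendix IV / tetrahedral ensemble) Let E_Tet be the set of four qubit states ρ_m with Bloch vectors m = (1/√3)(±1, ±1, ±1) satisfying m_x m_y m_z = +1/(3√3) · 3√3 > 0 (i.e., the product of the three signs is +1). There exists a family {π_{[i,j,k]}}_{i,j,k∈{±1}} of positive semidefinite 4×4 complex matrices with Σ_{i,j,k} π_{[i,j,k]} = I⊗I such that for every ρ_m ∈ E_Tet: Σ_{j,k} Tr[π_{[i,j,k]} (ρ_m ⊗ ρ_m)] = (1/2)(1 + i·m_x) for each i ∈ {±1}, Σ_{i,k} Tr[π_{[i,j,k]} (ρ_m ⊗ ρ_m)] = (1/2)(1 + j·m_y) for each j ∈ {±1}, and Σ_{i,j} Tr[π_{[i,j,k]} (ρ_m ⊗ ρ_m)] = (1/2)(1 + k·m_z) for each k ∈ {±1}; i.e., the sharp observables X, Y, Z are jointly measurable on parallel pairs drawn from the tetrahedral ensemble E_Tet. -/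

import Mathlib

open Matrix Complex
open scoped Kronecker Matrix ComplexOrder

noncomputable section

/-- Pauli matrix σ_x. -/
def σx : Matrix (Fin 2) (Fin 2) ℂ := !![0, 1; 1, 0]
/-- Pauli matrix σ_y. -/
def σy : Matrix (Fin 2) (Fin 2) ℂ := !![0, -Complex.I; Complex.I, 0]
/-- Pauli matrix σ_z. -/
def σz : Matrix (Fin 2) (Fin 2) ℂ := !![1, 0; 0, -1]

/-- The two-element set {+1, -1} of outcomes/signs. -/
def pm : Finset ℝ := {1, -1}

/-- Qubit state with Bloch vector m: ρ_m = (1/2)(I + m·σ). -/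
def rho (m : Fin 3 → ℝ) : Matrix (Fin 2) (Fin 2) ℂ :=
  (2 : ℂ)⁻¹ • ((1 : Matrix (Fin 2) (Fin 2) ℂ) + (m 0 : ℂ) • σx + (m 1 : ℂ) • σy + (m 2 : ℂ) • σz)

/-- The antiparallel-configuration effects Π↑↓_{[i,j,k]}. -/
def PiAnti (i j k : ℝ) : Matrix (Fin 2 × Fin 2) (Fin 2 × Fin 2) ℂ :=
  (16 : ℂ)⁻¹ • ((2 : ℂ) • (1 : Matrix (Fin 2 × Fin 2) (Fin 2 × Fin 2) ℂ)
    + (i : ℂ) • (σx ⊗ₖ (1 : Matrix (Fin 2) (Fin 2) ℂ) - (1 : Matrix (Fin 2) (Fin 2) ℂ) ⊗ₖ σx)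
    + (j : ℂ) • (σy ⊗ₖ (1 : Matrix (Fin 2) (Fin 2) ℂ) - (1 : Matrix (Fin 2) (Fin 2) ℂ) ⊗ₖ σy)
    + (k : ℂ) • (σz ⊗ₖ (1 : Matrix (Fin 2) (Fin 2) ℂ) - (1 : Matrix (Fin 2) (Fin 2) ℂ) ⊗ₖ σz)
    - ((i * j : ℝ) : ℂ) • (σx ⊗ₖ σy + σy ⊗ₖ σx)
    - ((j * k : ℝ) : ℂ) • (σy ⊗ₖ σz + σz ⊗ₖ σy)
    - ((k * i : ℝ) : ℂ) • (σz ⊗ₖ σx + σx ⊗ₖ σz))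

/-- The GPT effects Π#_{[i,j,k]}. -/
def PiSharp (i j k : ℝ) : Matrix (Fin 2 × Fin 2) (Fin 2 × Fin 2) ℂ :=
  (16 : ℂ)⁻¹ • ((2 : ℂ) • (1 : Matrix (Fin 2 × Fin 2) (Fin 2 × Fin 2) ℂ)
    + (i : ℂ) • (σx ⊗ₖ (1 : Matrix (Fin 2) (Fin 2) ℂ) + (1 : Matrix (Fin 2) (Fin 2) ℂ) ⊗ₖ σx)
    + (j : ℂ) • (σy ⊗ₖ (1 : Matrix (Fin 2) (Fin 2) ℂ) + (1 : Matrix (Fin 2) (Fin 2) ℂ) ⊗ₖ σy)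
    + (k : ℂ) • (σz ⊗ₖ (1 : Matrix (Fin 2) (Fin 2) ℂ) + (1 : Matrix (Fin 2) (Fin 2) ℂ) ⊗ₖ σz)
    + ((i * j : ℝ) : ℂ) • (σx ⊗ₖ σy + σy ⊗ₖ σx)
    + ((j * k : ℝ) : ℂ) • (σy ⊗ₖ σz + σz ⊗ₖ σy)
    + ((k * i : ℝ) : ℂ) • (σz ⊗ₖ σx + σx ⊗ₖ σz))

end

noncomputable section

/-- The parallel-configuration effects Π↑↑_{[i,j,k]} of Carmeli et al. -/
def PiPar (i j k : ℝ) : Matrix (Fin 2 × Fin 2) (Fin 2 × Fin 2) ℂ :=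
  (32 : ℂ)⁻¹ • ((4 : ℂ) • (1 : Matrix (Fin 2 × Fin 2) (Fin 2 × Fin 2) ℂ)
    + ((Real.sqrt 3 * i : ℝ) : ℂ) • (σx ⊗ₖ (1 : Matrix (Fin 2) (Fin 2) ℂ) + (1 : Matrix (Fin 2) (Fin 2) ℂ) ⊗ₖ σx)
    + ((Real.sqrt 3 * j : ℝ) : ℂ) • (σy ⊗ₖ (1 : Matrix (Fin 2) (Fin 2) ℂ) + (1 : Matrix (Fin 2) (Fin 2) ℂ) ⊗ₖ σy)
    + ((Real.sqrt 3 * k : ℝ) : ℂ) • (σz ⊗ₖ (1 : Matrix (Fin 2) (Fin 2) ℂ) + (1 : Matrix (Fin 2) (Fin 2) ℂ) ⊗ₖ σz)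
    + ((i * j : ℝ) : ℂ) • (σx ⊗ₖ σy + σy ⊗ₖ σx)
    + ((j * k : ℝ) : ℂ) • (σy ⊗ₖ σz + σz ⊗ₖ σy)
    + ((k * i : ℝ) : ℂ) • (σz ⊗ₖ σx + σx ⊗ₖ σz))

/-- The universal spin-flip (transformation) map F(A) = (Tr A)·I − A. -/
def Flip (A : Matrix (Fin 2) (Fin 2) ℂ) : Matrix (Fin 2) (Fin 2) ℂ :=
  A.trace • (1 : Matrix (Fin 2) (Fin 2) ℂ) - A

/-- The map id ⊗ Φ on M₂(ℂ) ⊗ M₂(ℂ), acting as A ⊗ B ↦ A ⊗ Φ(B) extended linearly. -/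
def idTensor (Φ : Matrix (Fin 2) (Fin 2) ℂ → Matrix (Fin 2) (Fin 2) ℂ)
    (M : Matrix (Fin 2 × Fin 2) (Fin 2 × Fin 2) ℂ) : Matrix (Fin 2 × Fin 2) (Fin 2 × Fin 2) ℂ :=
  Matrix.of fun p q => Φ (Matrix.of fun b d => M (p.1, b) (q.1, d)) p.2 q.2

/-- Choi matrix Σ_{k,l} E_{kl} ⊗ Λ(E_{kl}) of a linear map Λ on M₂(ℂ). -/
def Choi (Λ : Matrix (Fin 2) (Fin 2) ℂ →ₗ[ℂ] Matrix (Fin 2) (Fin 2) ℂ) :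
    Matrix (Fin 2 × Fin 2) (Fin 2 × Fin 2) ℂ :=
  ∑ k : Fin 2, ∑ l : Fin 2,
    (Matrix.single k l (1 : ℂ)) ⊗ₖ Λ (Matrix.single k l (1 : ℂ))

/-- Sign value of a Boolean outcome: true ↦ +1, false ↦ −1. -/
def sgn (b : Bool) : ℝ := if b then 1 else -1

/-- Unsharp spin effect P^a_{n̂,λ} = (1/2)(I + λ a n̂·σ). -/
def Peff (n : Fin 3 → ℝ) (lam a : ℝ) : Matrix (Fin 2) (Fin 2) ℂ :=
  (2 : ℂ)⁻¹ • ((1 : Matrix (Fin 2) (Fin 2) ℂ)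
    + ((lam * a * n 0 : ℝ) : ℂ) • σx + ((lam * a * n 1 : ℝ) : ℂ) • σy
    + ((lam * a * n 2 : ℝ) : ℂ) • σz)

/-- Computational basis vector |ab⟩ of ℂ²⊗ℂ². -/
def ket (a b : Fin 2) : Fin 2 × Fin 2 → ℂ := fun p => if p = (a, b) then 1 else 0

/-- Bell vector |φ⁺⟩. -/
def phiP : Fin 2 × Fin 2 → ℂ := ((Real.sqrt 2 : ℝ) : ℂ)⁻¹ • (ket 0 0 + ket 1 1)
/-- Bell vector |φ⁻⟩. -/
def phiM : Fin 2 × Fin 2 → ℂ := ((Real.sqrt 2 : ℝ) : ℂ)⁻¹ • (ket 0 0 - ket 1 1)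
/-- Bell vector |ψ⁺⟩. -/
def psiP : Fin 2 × Fin 2 → ℂ := ((Real.sqrt 2 : ℝ) : ℂ)⁻¹ • (ket 0 1 + ket 1 0)
/-- Bell vector |ψ⁻⟩. -/
def psiM : Fin 2 × Fin 2 → ℂ := ((Real.sqrt 2 : ℝ) : ℂ)⁻¹ • (ket 0 1 - ket 1 0)

/-- The vector |ξ_{[i,j,k]}⟩ = (1/2)(|ψ⁻⟩ − i|φ⁻⟩ + 𝐢 j|φ⁺⟩ + k|ψ⁺⟩). -/
def xi (i j k : ℝ) : Fin 2 × Fin 2 → ℂ :=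
  (2 : ℂ)⁻¹ • (psiM - (i : ℂ) • phiM + (Complex.I * (j : ℂ)) • phiP + (k : ℂ) • psiP)

end

/-!
The tetrahedral measurement `E_f = (3/4) ρ_f ⊗ ρ_f + (1/4) |ψ⁻⟩⟨ψ⁻|`, `f` running over the four
vertices, is a POVM because the tetrahedron is a 2-design:
`(3/4) ∑_f ρ_f ⊗ ρ_f = (1 + SWAP)/2` projects onto the symmetric subspace and
`|ψ⁻⟩⟨ψ⁻| = (1 - SWAP)/2`. On `ρ_e ⊗ ρ_e` it reports `f = e` with probability `3/4` and each other
vertex with probability `1/12`, so every coordinate sign of `f` has mean `2/3` times that of `e`.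
Reporting `i` for a sign `s` with probability `(1 + (√3/2) i s)/2`, independently in the three
coordinates, rescales the mean by `√3/2` and yields the sharp marginals `(1 + i e_x/√3)/2`.
-/

lemma sum_sum_trace_mul {ι κ n R : Type*} [Fintype n] [Semiring R] (s : Finset ι) (t : Finset κ)
    (X : ι → κ → Matrix n n R) (M : Matrix n n R) :
    ∑ i ∈ s, ∑ j ∈ t, (X i j * M).trace = ((∑ i ∈ s, ∑ j ∈ t, X i j) * M).trace := by
  simp only [Finset.sum_mul, trace_sum]

lemma rho_eq_of (m : Fin 3 → ℝ) : rho m =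
    !![(1 + (m 2 : ℂ)) / 2, ((m 0 : ℂ) - I * m 1) / 2;
       ((m 0 : ℂ) + I * m 1) / 2, (1 - (m 2 : ℂ)) / 2] := by
  ext i j
  fin_cases i <;> fin_cases j <;> simp [rho, σx, σy, σz] <;> ring

lemma rho_isHermitian (m : Fin 3 → ℝ) : (rho m).IsHermitian := by
  rw [IsHermitian, rho_eq_of]
  ext i j
  fin_cases i <;> fin_cases j <;> simp [Complex.ext_iff]

lemma det_rho (m : Fin 3 → ℝ) : (rho m).det = ((1 - m ⬝ᵥ m) / 4 : ℝ) := by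
  rw [rho_eq_of, det_fin_two_of]
  simp only [dotProduct, Fin.sum_univ_three]
  push_cast
  linear_combination ((m 1 : ℂ) ^ 2 / 4) * I_sq

lemma trace_rho_mul_rho (m n : Fin 3 → ℝ) :
    (rho m * rho n).trace = ((1 + m ⬝ᵥ n) / 2 : ℝ) := by
  rw [rho_eq_of, rho_eq_of, mul_fin_two, trace_fin_two_of]
  simp only [dotProduct, Fin.sum_univ_three]
  push_cast
  linear_combination (-(m 1 : ℂ) * n 1 / 2) * I_sq

lemma rho_mul_self {m : Fin 3 → ℝ} (hm : m ⬝ᵥ m = 1) : rho m * rho m = rho m := by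
  have hmC : ((m 0 : ℂ)) ^ 2 + (m 1 : ℂ) ^ 2 + (m 2 : ℂ) ^ 2 = 1 := by
    simp only [dotProduct, Fin.sum_univ_three] at hm
    exact_mod_cast (by linear_combination hm : m 0 ^ 2 + m 1 ^ 2 + m 2 ^ 2 = 1)
  rw [rho_eq_of, mul_fin_two]
  ext i j
  fin_cases i <;> fin_cases j <;>
    simp only [Fin.isValue, Fin.zero_eta, Fin.mk_one, of_apply, cons_val', cons_val_zero,
      cons_val_one, cons_val_fin_one]
  · linear_combination hmC / 4 - (m 1 : ℂ) ^ 2 / 4 * I_sq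
  · ring
  · ring
  · linear_combination hmC / 4 - (m 1 : ℂ) ^ 2 / 4 * I_sq

lemma rho_posSemidef {m : Fin 3 → ℝ} (hm : m ⬝ᵥ m = 1) : (rho m).PosSemidef := by
  simpa only [(rho_isHermitian m).eq, rho_mul_self hm] using
    posSemidef_conjTranspose_mul_self (rho m)

noncomputable def singlet : Matrix (Fin 2 × Fin 2) (Fin 2 × Fin 2) ℂ := vecMulVec psiM (star psiM)

lemma singlet_posSemidef : singlet.PosSemidef := posSemidef_vecMulVec_self_star psiM

def swapMatrix : Matrix (Fin 2 × Fin 2) (Fin 2 × Fin 2) ℂ :=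
  of fun p q => if p = q.swap then 1 else 0

lemma singlet_eq : singlet = (2 : ℂ)⁻¹ • (1 - swapMatrix) := by
  have h2 : ((√2 : ℝ) : ℂ)⁻¹ * ((√2 : ℝ) : ℂ)⁻¹ = 2⁻¹ := by
    rw [← mul_inv, ← ofReal_mul, Real.mul_self_sqrt zero_le_two, ofReal_ofNat]
  ext ⟨p1, p2⟩ ⟨q1, q2⟩
  fin_cases p1 <;> fin_cases p2 <;> fin_cases q1 <;> fin_cases q2 <;>
    simp [singlet, swapMatrix, psiM, ket, vecMulVec_apply, one_apply, h2]

lemma trace_swapMatrix_mul_kronecker (A B : Matrix (Fin 2) (Fin 2) ℂ) :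
    (swapMatrix * (A ⊗ₖ B)).trace = (A * B).trace := by
  simp only [trace, swapMatrix, diag_apply, mul_apply, of_apply, kroneckerMap_apply, ite_mul,
    one_mul, zero_mul, Fintype.sum_prod_type, Prod.swap_prod_mk, Fin.sum_univ_two, Fin.isValue,
    Prod.mk.injEq, and_true, zero_ne_one, and_false, ↓reduceIte, add_zero, one_ne_zero, zero_add]
  ring

lemma trace_kronecker_self_mul_kronecker_self (A B : Matrix (Fin 2) (Fin 2) ℂ) :
    ((A ⊗ₖ A) * (B ⊗ₖ B)).trace = (A * B).trace ^ 2 := by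
  rw [← mul_kronecker_mul, trace_kronecker, sq]

lemma trace_singlet_mul_kronecker_self (A : Matrix (Fin 2) (Fin 2) ℂ) :
    (singlet * (A ⊗ₖ A)).trace = A.det := by
  rw [singlet_eq, smul_mul, sub_mul, one_mul, trace_smul, trace_sub, trace_kronecker,
    trace_swapMatrix_mul_kronecker, trace_fin_two, trace_fin_two, det_fin_two, mul_apply,
    mul_apply, Fin.sum_univ_two, Fin.sum_univ_two, smul_eq_mul]
  ring

lemma mul_self_of_mem_pm {a : ℝ} (ha : a ∈ pm) : a * a = 1 := by
  simp only [pm, Finset.mem_insert, Finset.mem_singleton] at ha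
  rcases ha with rfl | rfl <;> norm_num

lemma mul_mem_pm {a b : ℝ} (ha : a ∈ pm) (hb : b ∈ pm) : a * b ∈ pm := by
  simp only [pm, Finset.mem_insert, Finset.mem_singleton] at ha hb ⊢
  rcases ha with rfl | rfl <;> rcases hb with rfl | rfl <;> norm_num

noncomputable def tetBloch (a b c : ℝ) : Fin 3 → ℝ := ![a / √3, b / √3, c / √3]

lemma tetBloch_dotProduct (a b c d e f : ℝ) :
    tetBloch a b c ⬝ᵥ tetBloch d e f = (a * d + b * e + c * f) / 3 := by
  simp only [tetBloch, dotProduct, Fin.sum_univ_three, Matrix.cons_val]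
  field_simp
  rw [Real.sq_sqrt (by norm_num)]
  ring

lemma tetBloch_dotProduct_self {a b c : ℝ} (ha : a ∈ pm) (hb : b ∈ pm) (hc : c ∈ pm) :
    tetBloch a b c ⬝ᵥ tetBloch a b c = 1 := by
  rw [tetBloch_dotProduct, mul_self_of_mem_pm ha, mul_self_of_mem_pm hb, mul_self_of_mem_pm hc]
  norm_num

lemma sum_rho_tetBloch_kronecker_self :
    ∑ a ∈ pm, ∑ b ∈ pm, rho (tetBloch a b (a * b)) ⊗ₖ rho (tetBloch a b (a * b))
      = (2 / 3 : ℂ) • (1 + swapMatrix) := by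
  have h3 : ((√3 : ℝ) : ℂ)⁻¹ ^ 2 = 3⁻¹ := by
    rw [inv_pow, ← ofReal_pow, Real.sq_sqrt (by norm_num), ofReal_ofNat]
  ext ⟨p1, p2⟩ ⟨q1, q2⟩
  simp only [pm, Finset.sum_pair (show (1 : ℝ) ≠ -1 by norm_num), tetBloch, rho_eq_of,
    Matrix.add_apply, Matrix.smul_apply, kroneckerMap_apply]
  fin_cases p1 <;> fin_cases p2 <;> fin_cases q1 <;> fin_cases q2 <;>
    simp [swapMatrix, one_apply, div_eq_mul_inv] <;> ring_nf <;> simp only [h3, I_sq] <;>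
    norm_num

-- `a, b ∈ pm` enumerate the tetrahedron through its sign vectors `(a, b, a * b)`.
noncomputable def tetEffect (a b : ℝ) : Matrix (Fin 2 × Fin 2) (Fin 2 × Fin 2) ℂ :=
  (3 / 4 : ℂ) • (rho (tetBloch a b (a * b)) ⊗ₖ rho (tetBloch a b (a * b))) + (4 : ℂ)⁻¹ • singlet

lemma tetEffect_posSemidef {a b : ℝ} (ha : a ∈ pm) (hb : b ∈ pm) :
    (tetEffect a b).PosSemidef := by
  have hv := tetBloch_dotProduct_self ha hb (mul_mem_pm ha hb)
  exact (((rho_posSemidef hv).kronecker (rho_posSemidef hv)).smul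
    (by norm_num [Complex.le_def])).add (singlet_posSemidef.smul (by norm_num [Complex.le_def]))

lemma card_pm : pm.card = 2 := Finset.card_pair (by norm_num)

lemma sum_tetEffect : ∑ a ∈ pm, ∑ b ∈ pm, tetEffect a b = 1 := by
  simp only [tetEffect, Finset.sum_add_distrib, ← Finset.smul_sum, sum_rho_tetBloch_kronecker_self,
    Finset.sum_const, card_pm, singlet_eq]
  module

noncomputable def tetProb (m : Fin 3 → ℝ) (a b : ℝ) : ℝ :=
  3 / 4 * ((1 + tetBloch a b (a * b) ⬝ᵥ m) / 2) ^ 2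

lemma tetProb_tetBloch {a b ex ey : ℝ} (ha : a ∈ pm) (hb : b ∈ pm) (hx : ex ∈ pm)
    (hy : ey ∈ pm) :
    tetProb (tetBloch ex ey (ex * ey)) a b = if a = ex ∧ b = ey then 3 / 4 else 1 / 12 := by
  simp only [pm, Finset.mem_insert, Finset.mem_singleton] at ha hb hx hy
  rw [tetProb, tetBloch_dotProduct]
  rcases ha with rfl | rfl <;> rcases hb with rfl | rfl <;> rcases hx with rfl | rfl <;>
    rcases hy with rfl | rfl <;> norm_num

lemma trace_tetEffect_mul_kronecker_self {m : Fin 3 → ℝ} (hm : m ⬝ᵥ m = 1) (a b : ℝ) :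
    (tetEffect a b * (rho m ⊗ₖ rho m)).trace = tetProb m a b := by
  rw [tetEffect, add_mul, smul_mul, smul_mul, trace_add, trace_smul, trace_smul,
    trace_kronecker_self_mul_kronecker_self, trace_rho_mul_rho, trace_singlet_mul_kronecker_self,
    det_rho, hm, tetProb]
  push_cast
  ring

lemma trace_sum_smul_tetEffect_mul {m : Fin 3 → ℝ} (hm : m ⬝ᵥ m = 1) (c : ℝ → ℝ → ℝ) :
    ((∑ a ∈ pm, ∑ b ∈ pm, (c a b : ℂ) • tetEffect a b) * (rho m ⊗ₖ rho m)).trace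
      = ((∑ a ∈ pm, ∑ b ∈ pm, c a b * tetProb m a b : ℝ) : ℂ) := by
  simp only [Finset.sum_mul, trace_sum, smul_mul, trace_smul,
    trace_tetEffect_mul_kronecker_self hm, smul_eq_mul]
  push_cast
  rfl

noncomputable def signKernel (i s : ℝ) : ℝ := (1 + √3 / 2 * i * s) / 2

lemma signKernel_nonneg {i s : ℝ} (hi : i ∈ pm) (hs : s ∈ pm) : 0 ≤ signKernel i s := by
  have h3 : √3 ^ 2 = 3 := Real.sq_sqrt (by norm_num)
  have his := mul_mem_pm hi hs
  simp only [pm, Finset.mem_insert, Finset.mem_singleton] at his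
  rw [signKernel, mul_assoc]
  rcases his with h | h <;> rw [h] <;> nlinarith [Real.sqrt_nonneg 3]

lemma sum_signKernel (s : ℝ) : ∑ i ∈ pm, signKernel i s = 1 := by
  rw [pm, Finset.sum_pair (by norm_num), signKernel, signKernel]
  ring

noncomputable def jointEffect (i j k : ℝ) : Matrix (Fin 2 × Fin 2) (Fin 2 × Fin 2) ℂ :=
  ∑ a ∈ pm, ∑ b ∈ pm, ((signKernel i a * signKernel j b * signKernel k (a * b) : ℝ) : ℂ) •
    tetEffect a b

lemma jointEffect_posSemidef {i j k : ℝ} (hi : i ∈ pm) (hj : j ∈ pm) (hk : k ∈ pm) :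
    (jointEffect i j k).PosSemidef :=
  posSemidef_sum _ fun _ ha => posSemidef_sum _ fun _ hb =>
    (tetEffect_posSemidef ha hb).smul <| Complex.zero_le_real.mpr <|
      mul_nonneg (mul_nonneg (signKernel_nonneg hi ha) (signKernel_nonneg hj hb))
        (signKernel_nonneg hk (mul_mem_pm ha hb))

lemma sum_jointEffect_yz (i : ℝ) : ∑ j ∈ pm, ∑ k ∈ pm, jointEffect i j k
    = ∑ a ∈ pm, ∑ b ∈ pm, (signKernel i a : ℂ) • tetEffect a b := by
  simp only [jointEffect, pm, Finset.sum_pair (show (1 : ℝ) ≠ -1 by norm_num), signKernel]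
  push_cast
  module

lemma sum_jointEffect_xz (j : ℝ) : ∑ i ∈ pm, ∑ k ∈ pm, jointEffect i j k
    = ∑ a ∈ pm, ∑ b ∈ pm, (signKernel j b : ℂ) • tetEffect a b := by
  simp only [jointEffect, pm, Finset.sum_pair (show (1 : ℝ) ≠ -1 by norm_num), signKernel]
  push_cast
  module

lemma sum_jointEffect_xy (k : ℝ) : ∑ i ∈ pm, ∑ j ∈ pm, jointEffect i j k
    = ∑ a ∈ pm, ∑ b ∈ pm, (signKernel k (a * b) : ℂ) • tetEffect a b := by
  simp only [jointEffect, pm, Finset.sum_pair (show (1 : ℝ) ≠ -1 by norm_num), signKernel]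
  push_cast
  module

lemma sum_jointEffect : ∑ i ∈ pm, ∑ j ∈ pm, ∑ k ∈ pm, jointEffect i j k = 1 := by
  simp only [sum_jointEffect_yz]
  rw [Finset.sum_comm]
  refine (Finset.sum_congr rfl fun a _ => ?_).trans sum_tetEffect
  rw [Finset.sum_comm]
  simp only [← Finset.sum_smul, ← ofReal_sum, sum_signKernel, ofReal_one, one_smul]

lemma sum_signKernel_mul_tetProb (g : ℝ → ℝ → ℝ) (hg : ∑ a ∈ pm, ∑ b ∈ pm, g a b = 0)
    {ex ey : ℝ} (hx : ex ∈ pm) (hy : ey ∈ pm) (i : ℝ) :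
    ∑ a ∈ pm, ∑ b ∈ pm, signKernel i (g a b) * tetProb (tetBloch ex ey (ex * ey)) a b
      = 1 / 2 * (1 + i * (g ex ey / √3)) := by
  have h3 : √3 ^ 2 = 3 := Real.sq_sqrt (by norm_num)
  rw [Finset.sum_congr rfl fun a ha => Finset.sum_congr rfl fun b hb => by
    rw [tetProb_tetBloch ha hb hx hy]]
  simp only [pm, Finset.sum_pair (show (1 : ℝ) ≠ -1 by norm_num), Finset.mem_insert,
    Finset.mem_singleton] at hg hx hy ⊢
  rcases hx with rfl | rfl <;> rcases hy with rfl | rfl <;> norm_num [signKernel] <;>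
    field_simp <;> ring_nf <;> simp only [h3] <;> linear_combination 12 * i * hg

/-- Appendix IV: the sharp observables X, Y, Z are jointly measurable
on parallel pairs drawn from the tetrahedral ensemble, whose Bloch vectors are
(1/√3)(ε_x, ε_y, ε_z) with ε_x ε_y ε_z = +1. -/
theorem tetrahedral_parallel_sharp :
    ∃ π : ℝ → ℝ → ℝ → Matrix (Fin 2 × Fin 2) (Fin 2 × Fin 2) ℂ,
      (∀ i ∈ pm, ∀ j ∈ pm, ∀ k ∈ pm, (π i j k).PosSemidef) ∧
      (∑ i ∈ pm, ∑ j ∈ pm, ∑ k ∈ pm, π i j k = 1) ∧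
      ∀ ex ∈ pm, ∀ ey ∈ pm, ∀ ez ∈ pm, ex * ey * ez = 1 →
        (∀ i ∈ pm, ∑ j ∈ pm, ∑ k ∈ pm,
            (π i j k * (rho ![ex / Real.sqrt 3, ey / Real.sqrt 3, ez / Real.sqrt 3] ⊗ₖ rho ![ex / Real.sqrt 3, ey / Real.sqrt 3, ez / Real.sqrt 3])).trace
              = ((1 / 2 * (1 + i * (ex / Real.sqrt 3)) : ℝ) : ℂ)) ∧
        (∀ j ∈ pm, ∑ i ∈ pm, ∑ k ∈ pm,
            (π i j k * (rho ![ex / Real.sqrt 3, ey / Real.sqrt 3, ez / Real.sqrt 3] ⊗ₖ rho ![ex / Real.sqrt 3, ey / Real.sqrt 3, ez / Real.sqrt 3])).trace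
              = ((1 / 2 * (1 + j * (ey / Real.sqrt 3)) : ℝ) : ℂ)) ∧
        (∀ k ∈ pm, ∑ i ∈ pm, ∑ j ∈ pm,
            (π i j k * (rho ![ex / Real.sqrt 3, ey / Real.sqrt 3, ez / Real.sqrt 3] ⊗ₖ rho ![ex / Real.sqrt 3, ey / Real.sqrt 3, ez / Real.sqrt 3])).trace
              = ((1 / 2 * (1 + k * (ez / Real.sqrt 3)) : ℝ) : ℂ)) := by
  refine ⟨jointEffect, fun i hi j hj k hk => jointEffect_posSemidef hi hj hk, sum_jointEffect, ?_⟩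
  intro ex hx ey hy ez _ hxyz
  obtain rfl : ez = ex * ey := by
    linear_combination
      ex * ey * hxyz - ez * mul_self_of_mem_pm hx - ez * ex * ex * mul_self_of_mem_pm hy
  have hm := tetBloch_dotProduct_self hx hy (mul_mem_pm hx hy)
  refine ⟨fun i _ => ?_, fun j _ => ?_, fun k _ => ?_⟩
  · rw [sum_sum_trace_mul, sum_jointEffect_yz]
    exact (trace_sum_smul_tetEffect_mul hm _).trans
      (congrArg _ (sum_signKernel_mul_tetProb (fun a _ => a) (by norm_num [pm]) hx hy i))
  · rw [sum_sum_trace_mul, sum_jointEffect_xz]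
    exact (trace_sum_smul_tetEffect_mul hm _).trans
      (congrArg _ (sum_signKernel_mul_tetProb (fun _ b => b) (by norm_num [pm]) hx hy j))
  · rw [sum_sum_trace_mul, sum_jointEffect_xy]
    exact (trace_sum_smul_tetEffect_mul hm _).trans
      (congrArg _ (sum_signKernel_mul_tetProb (· * ·) (by norm_num [pm]) hx hy k))
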